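/- Let m ≥ 1 and s ≥ 0 be integers with s < m and m − s even. Let Tr : F_{2^m} → F_2 denote the absolute trace, and for t ∈ F_2 write (−1)^t ∈ ℤ for 1 if t = 0 and −1 if t = 1. Let g : F_{2^m} → F_{2^m} be a bijection with g(0) = 0 which is vectorial s-plateaued, i.e. for every b ∈ F_{2^m} \ {0} and every c ∈ F_{2^m}, (Σ_{y ∈ F_{2^m}} (−1)^{Tr(b·g(y) + c·y)})² ∈ {0, 2^{m+s}}. Let g⁻¹ denote the inverse of g. Then the number of pairs (a,b) ∈ F_{2^m}² with (a,b) ≠ (0,0) such that #{x ∈ F_{2^m} : Tr(a·g⁻¹(x) + b·x) = 1} = 2^{m-1} − 2^{(m+s-2)/2} equals (2^m − 1)·(2^{m-s-1} + 2^{(m-s-2)/2}). -/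
import Mathlib


/-- `(-1)^t ∈ ℤ` for `t ∈ F₂`: `1` if `t = 0` and `-1` if `t = 1`. -/
def sgn (t : ZMod 2) : ℤ := if t = 0 then 1 else -1

lemma sgn_add (t u : ZMod 2) : sgn (t + u) = sgn t * sgn u := by revert t u; decide

lemma sgn_eq (t : ZMod 2) : sgn t = 1 - 2 * (if t = 1 then 1 else 0) := by revert t; decide

section Aux
variable {K : Type} [Field K] [Fintype K] [Algebra (ZMod 2) K]

lemma sum_sgn_trace_zero {y : K} (hy : y ≠ 0) :
    ∑ a : K, sgn (Algebra.trace (ZMod 2) K (a * y)) = 0 := by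
  classical
  obtain ⟨z, hz⟩ : ∃ z : K, Algebra.trace (ZMod 2) K z ≠ 0 := by
    by_contra h
    push_neg at h
    exact Algebra.trace_ne_zero (ZMod 2) K (LinearMap.ext h)
  have hz1 : Algebra.trace (ZMod 2) K (z * y⁻¹ * y) = 1 := by
    rw [mul_assoc, inv_mul_cancel₀ hy, mul_one]
    revert hz
    generalize Algebra.trace (ZMod 2) K z = t
    revert t
    decide
  have hneg : ∀ a : K, sgn (Algebra.trace (ZMod 2) K ((a + z * y⁻¹) * y))
      = - sgn (Algebra.trace (ZMod 2) K (a * y)) := by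
    intro a
    rw [add_mul, map_add, sgn_add, hz1]
    have h1 : ∀ u : ZMod 2, sgn u * sgn 1 = - sgn u := by decide
    exact h1 _
  have hrw : ∑ a : K, sgn (Algebra.trace (ZMod 2) K ((a + z * y⁻¹) * y))
      = ∑ a : K, sgn (Algebra.trace (ZMod 2) K (a * y)) :=
    Fintype.sum_equiv (Equiv.addRight (z * y⁻¹)) _ _ (fun a => rfl)
  rw [Finset.sum_congr rfl fun a _ => hneg a, Finset.sum_neg_distrib] at hrw
  linarith

lemma sum_sgn_trace_zero' (m : ℕ) (hcard : Fintype.card K = 2 ^ m) :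
    ∑ a : K, sgn (Algebra.trace (ZMod 2) K (a * (0:K))) = 2^m := by
  simp only [mul_zero, map_zero]
  rw [Finset.sum_const]
  simp [sgn, Finset.card_univ, hcard]

noncomputable def walsh (g : K ≃ K) (b a : K) : ℤ :=
  ∑ y : K, sgn (Algebra.trace (ZMod 2) K (b * g y + a * y))

lemma walsh_mean (m : ℕ) (hcard : Fintype.card K = 2 ^ m) (g : K ≃ K) (hg0 : g 0 = 0) (b : K) :
    ∑ a : K, walsh g b a = 2 ^ m := by
  classical
  have step : ∀ a y : K, sgn (Algebra.trace (ZMod 2) K (b * g y + a * y))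
      = sgn (Algebra.trace (ZMod 2) K (b * g y)) * sgn (Algebra.trace (ZMod 2) K (a * y)) := by
    intro a y
    rw [← sgn_add, ← map_add]
  calc ∑ a : K, walsh g b a
      = ∑ y : K, ∑ a : K, sgn (Algebra.trace (ZMod 2) K (b * g y + a * y)) := Finset.sum_comm
    _ = ∑ y : K, ∑ a : K, sgn (Algebra.trace (ZMod 2) K (b * g y))
          * sgn (Algebra.trace (ZMod 2) K (a * y)) :=
        Finset.sum_congr rfl fun y _ => Finset.sum_congr rfl fun a _ => step a y
    _ = ∑ y : K, sgn (Algebra.trace (ZMod 2) K (b * g y))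
          * ∑ a : K, sgn (Algebra.trace (ZMod 2) K (a * y)) :=
        Finset.sum_congr rfl fun y _ => (Finset.mul_sum _ _ _).symm
    _ = 2 ^ m := by
        rw [Finset.sum_eq_single 0]
        · rw [sum_sgn_trace_zero' m hcard, hg0, mul_zero, map_zero]
          simp [sgn]
        · intro y _ hy
          rw [sum_sgn_trace_zero hy, mul_zero]
        · intro h; exact absurd (Finset.mem_univ 0) h

lemma walsh_parseval (m : ℕ) (hcard : Fintype.card K = 2 ^ m) (g : K ≃ K) (b : K) :
    ∑ a : K, (walsh g b a) ^ 2 = 2 ^ m * 2 ^ m := by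
  classical
  haveI : CharP K 2 := charP_of_injective_algebraMap (algebraMap (ZMod 2) K).injective 2
  have key : ∀ y z : K, ∑ a : K, sgn (Algebra.trace (ZMod 2) K (b * g y + a * y))
      * sgn (Algebra.trace (ZMod 2) K (b * g z + a * z)) = if z = y then (2^m : ℤ) else 0 := by
    intro y z
    have h1 : ∀ a : K, sgn (Algebra.trace (ZMod 2) K (b * g y + a * y))
        * sgn (Algebra.trace (ZMod 2) K (b * g z + a * z))
        = sgn (Algebra.trace (ZMod 2) K (b * (g y + g z)))
          * sgn (Algebra.trace (ZMod 2) K (a * (y + z))) := by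
      intro a
      rw [← sgn_add, ← sgn_add, ← map_add, ← map_add]
      congr 2
      ring
    rw [Finset.sum_congr rfl fun a _ => h1 a, ← Finset.mul_sum]
    by_cases h : z = y
    · subst h
      rw [if_pos rfl]
      have hz0 : z + z = 0 := CharTwo.add_self_eq_zero z
      have hgz : g z + g z = 0 := CharTwo.add_self_eq_zero _
      rw [hz0, hgz, sum_sgn_trace_zero' m hcard, mul_zero, map_zero]
      simp [sgn]
    · have hyz : y + z ≠ 0 := by
        intro hc
        exact h ((eq_neg_of_add_eq_zero_right hc).trans (CharTwo.neg_eq y))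
      rw [if_neg h, sum_sgn_trace_zero hyz, mul_zero]
  calc ∑ a : K, (walsh g b a) ^ 2
      = ∑ a : K, ∑ y : K, ∑ z : K, sgn (Algebra.trace (ZMod 2) K (b * g y + a * y))
          * sgn (Algebra.trace (ZMod 2) K (b * g z + a * z)) := by
        refine Finset.sum_congr rfl fun a _ => ?_
        rw [sq, walsh, Finset.sum_mul_sum]
    _ = ∑ y : K, ∑ z : K, ∑ a : K, sgn (Algebra.trace (ZMod 2) K (b * g y + a * y))
          * sgn (Algebra.trace (ZMod 2) K (b * g z + a * z)) := by
        rw [Finset.sum_comm]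
        exact Finset.sum_congr rfl fun y _ => Finset.sum_comm
    _ = ∑ y : K, ∑ z : K, (if z = y then (2^m : ℤ) else 0) :=
        Finset.sum_congr rfl fun y _ => Finset.sum_congr rfl fun z _ => key y z
    _ = ∑ y : K, (2 ^ m : ℤ) := by
        refine Finset.sum_congr rfl fun y _ => ?_
        simp
    _ = 2 ^ m * 2 ^ m := by
        rw [Finset.sum_const]
        simp [Finset.card_univ, hcard]

end Aux

section Aux2
variable {K : Type} [Field K] [Fintype K] [Algebra (ZMod 2) K]

lemma walsh_count (m s f : ℕ) (hf1 : 1 ≤ f) (hmsf : m = s + 2 * f)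
    (hcard : Fintype.card K = 2 ^ m) (g : K ≃ K) (hg0 : g 0 = 0) (b : K)
    (hvals : ∀ a : K, walsh g b a = 0 ∨ walsh g b a = 2^(s+f) ∨ walsh g b a = -2^(s+f)) :
    (Finset.univ.filter fun a : K => walsh g b a = 2^(s+f)).card
      = 2^(m-s-1) + 2^((m-s-2)/2) := by
  classical
  set C : ℤ := 2^(s+f) with hC
  have hCpos : (0:ℤ) < C := by positivity
  set P := (Finset.univ.filter fun a : K => walsh g b a = C) with hP
  set Q := (Finset.univ.filter fun a : K => walsh g b a = -C) with hQ
  have hW1 : ∀ a : K, walsh g b a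
      = C * (if walsh g b a = C then 1 else 0) - C * (if walsh g b a = -C then 1 else 0) := by
    intro a
    rcases hvals a with h | h | h <;> rw [h]
    · rw [if_neg (by linarith : (0:ℤ) ≠ C), if_neg (by linarith : (0:ℤ) ≠ -C)]; ring
    · rw [if_pos rfl, if_neg (by linarith : C ≠ -C)]; ring
    · rw [if_neg (by linarith : -C ≠ C), if_pos rfl]; ring
  have hW2 : ∀ a : K, (walsh g b a)^2
      = C^2 * (if walsh g b a = C then 1 else 0) + C^2 * (if walsh g b a = -C then 1 else 0) := by
    intro a
    rcases hvals a with h | h | h <;> rw [h]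
    · rw [if_neg (by linarith : (0:ℤ) ≠ C), if_neg (by linarith : (0:ℤ) ≠ -C)]; ring
    · rw [if_pos rfl, if_neg (by linarith : C ≠ -C)]; ring
    · rw [if_neg (by linarith : -C ≠ C), if_pos rfl]; ring
  have hsum1 : (2^m : ℤ) = C * P.card - C * Q.card := by
    rw [← walsh_mean m hcard g hg0 b, Finset.sum_congr rfl fun a _ => hW1 a,
      Finset.sum_sub_distrib, ← Finset.mul_sum, ← Finset.mul_sum,
      Finset.sum_boole, Finset.sum_boole, hP, hQ]
  have hsum2 : (2^m * 2^m : ℤ) = C^2 * P.card + C^2 * Q.card := by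
    rw [← walsh_parseval m hcard g b, Finset.sum_congr rfl fun a _ => hW2 a,
      Finset.sum_add_distrib, ← Finset.mul_sum, ← Finset.mul_sum,
      Finset.sum_boole, Finset.sum_boole, hP, hQ]
  have e1 : (P.card : ℤ) - Q.card = 2^f := by
    have hm' : (2:ℤ)^m = C * 2^f := by rw [hC, ← pow_add]; congr 1; omega
    exact mul_left_cancel₀ (ne_of_gt hCpos)
      (show C * ((P.card:ℤ) - Q.card) = C * 2^f by rw [mul_sub]; linarith)
  have e2 : (P.card : ℤ) + Q.card = 2^(2*f) := by
    have hm' : (2:ℤ)^m * 2^m = C^2 * 2^(2*f) := by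
      rw [hC, ← pow_mul, ← pow_add, ← pow_add]; congr 1; omega
    have h2 : (0:ℤ) < C^2 := by positivity
    exact mul_left_cancel₀ (ne_of_gt h2) (by rw [mul_add]; linarith)
  have e3 : (P.card : ℤ) = 2^(2*f-1) + 2^(f-1) := by
    have d1 : (2:ℤ)^(2*f) = 2 * 2^(2*f-1) := by rw [← pow_succ']; congr 1; omega
    have d2 : (2:ℤ)^f = 2 * 2^(f-1) := by rw [← pow_succ']; congr 1; omega
    linarith
  have e4 : (P.card : ℤ) = ((2^(m-s-1) + 2^((m-s-2)/2) : ℕ) : ℤ) := by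
    rw [e3]
    push_cast
    rw [show m-s-1 = 2*f-1 by omega, show (m-s-2)/2 = f-1 by omega]
  exact_mod_cast e4

end Aux2


/-- Multiplicity of the minimum weight in Corollary 5.7: for `g` a
normalized bijective `s`-plateaued function with `s < m` and `m − s` even, the number of
nonzero pairs `(a,b)` whose codeword of `C(g⁻¹)` has weight `2^{m-1} − 2^{(m+s-2)/2}` is
`(2^m − 1)·(2^{m-s-1} + 2^{(m-s-2)/2})`. -/
theorem stmt_16 (m s : ℕ) (hm : 1 ≤ m) (hsm : s < m) (hms : Even (m - s))
    (K : Type) [Field K] [Fintype K] [Algebra (ZMod 2) K]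
    (hcard : Fintype.card K = 2 ^ m)
    (g : K ≃ K) (hg0 : g 0 = 0)
    (hplat : ∀ b : K, b ≠ 0 → ∀ c : K,
      (∑ y : K, sgn (Algebra.trace (ZMod 2) K (b * g y + c * y))) ^ 2 ∈
        ({0, 2 ^ (m + s)} : Set ℤ)) :
    {ab : K × K | ab ≠ (0, 0) ∧
        {x : K |
            Algebra.trace (ZMod 2) K (ab.1 * g.symm x + ab.2 * x) = 1}.ncard =
          2 ^ (m - 1) - 2 ^ ((m + s - 2) / 2)}.ncard =
      (2 ^ m - 1) * (2 ^ (m - s - 1) + 2 ^ ((m - s - 2) / 2)) := by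
  classical
  obtain ⟨f, hf⟩ := hms
  have hf1 : 1 ≤ f := by omega
  have hmsf : m = s + 2 * f := by omega
  have hvals : ∀ b : K, b ≠ 0 → ∀ a : K,
      walsh g b a = 0 ∨ walsh g b a = 2^(s+f) ∨ walsh g b a = -2^(s+f) := by
    intro b hb a
    have h := hplat b hb a
    simp only [Set.mem_insert_iff, Set.mem_singleton_iff] at h
    have hWa : (walsh g b a) ^ 2
        = (∑ y : K, sgn (Algebra.trace (ZMod 2) K (b * g y + a * y))) ^ 2 := rfl
    rcases h with h | h
    · left
      exact pow_eq_zero_iff two_ne_zero |>.mp (hWa.trans h)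
    · have hC2 : ((2:ℤ)^(s+f)) ^ 2 = 2 ^ (m + s) := by
        rw [← pow_mul]; congr 1; omega
      have hsq : (walsh g b a) ^ 2 = ((2:ℤ)^(s+f))^2 := by rw [hWa, h, hC2]
      have h0 : (walsh g b a - 2^(s+f)) * (walsh g b a + 2^(s+f)) = 0 := by
        linear_combination hsq
      rcases mul_eq_zero.mp h0 with h' | h'
      · right; left; linarith
      · right; right; linarith
  have hS : ∀ a b : K, ∑ x : K, sgn (Algebra.trace (ZMod 2) K (a * g.symm x + b * x))
      = walsh g b a := by
    intro a b
    refine (Fintype.sum_equiv g (fun y => sgn (Algebra.trace (ZMod 2) K (b * g y + a * y)))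
      (fun x => sgn (Algebra.trace (ZMod 2) K (a * g.symm x + b * x))) fun y => ?_).symm
    simp only [Equiv.symm_apply_apply]
    rw [add_comm]
  have hiff : ∀ a b : K,
      ({x : K | Algebra.trace (ZMod 2) K (a * g.symm x + b * x) = 1}.ncard
        = 2^(m-1) - 2^((m+s-2)/2)) ↔ walsh g b a = 2^(s+f) := by
    intro a b
    have hsetf : {x : K | Algebra.trace (ZMod 2) K (a * g.symm x + b * x) = 1}
        = ↑(Finset.univ.filter fun x : K =>
            Algebra.trace (ZMod 2) K (a * g.symm x + b * x) = 1) := by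
      ext x; simp
    rw [hsetf, Set.ncard_coe_finset]
    have hkey : walsh g b a = 2^m
        - 2 * ((Finset.univ.filter fun x : K =>
            Algebra.trace (ZMod 2) K (a * g.symm x + b * x) = 1).card : ℤ) := by
      rw [← hS a b, Finset.sum_congr rfl fun x _ => sgn_eq _, Finset.sum_sub_distrib,
        ← Finset.mul_sum, Finset.sum_boole, Finset.sum_const]
      simp [Finset.card_univ, hcard]
    set N := (Finset.univ.filter fun x : K =>
      Algebra.trace (ZMod 2) K (a * g.symm x + b * x) = 1).card with hN
    have hle : (2:ℕ)^((m+s-2)/2) ≤ 2^(m-1) := Nat.pow_le_pow_right (by norm_num) (by omega)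
    have d1 : (2:ℤ)^m = 2 * 2^(m-1) := by rw [← pow_succ']; congr 1; omega
    have d2 : (2:ℤ)^(s+f) = 2 * 2^((m+s-2)/2) := by rw [← pow_succ']; congr 1; omega
    constructor
    · intro h
      have hNz : (N : ℤ) = 2^(m-1) - 2^((m+s-2)/2) := by
        rw [h, Nat.cast_sub hle]; push_cast; ring
      rw [hkey, hNz]; linarith
    · intro h
      rw [hkey] at h
      have hNz : (N : ℤ) = ((2^(m-1) : ℕ) : ℤ) - ((2^((m+s-2)/2) : ℕ) : ℤ) := by
        push_cast; linarith
      have : (N : ℤ) = ((2^(m-1) - 2^((m+s-2)/2) : ℕ) : ℤ) := by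
        rw [Nat.cast_sub hle]; exact hNz
      exact_mod_cast this
  have hzero : ∀ a : K, a ≠ 0 → walsh g 0 a = 0 := by
    intro a ha
    have h1 : ∀ y : K, sgn (Algebra.trace (ZMod 2) K ((0:K) * g y + a * y))
        = sgn (Algebra.trace (ZMod 2) K (y * a)) := by
      intro y; rw [zero_mul, zero_add, mul_comm]
    calc walsh g 0 a = ∑ y : K, sgn (Algebra.trace (ZMod 2) K (y * a)) :=
          Finset.sum_congr rfl fun y _ => h1 y
      _ = 0 := sum_sgn_trace_zero ha
  have hset : {ab : K × K | ab ≠ (0, 0) ∧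
        {x : K | Algebra.trace (ZMod 2) K (ab.1 * g.symm x + ab.2 * x) = 1}.ncard
          = 2 ^ (m - 1) - 2 ^ ((m + s - 2) / 2)}
      = ↑(Finset.univ.filter fun ab : K × K => ab.2 ≠ 0 ∧ walsh g ab.2 ab.1 = 2^(s+f)) := by
    ext ⟨a, b⟩
    simp only [Set.mem_setOf_eq, Finset.coe_filter, Finset.mem_univ, true_and]
    constructor
    · rintro ⟨hne, hcond⟩
      have hw : walsh g b a = 2^(s+f) := (hiff a b).mp hcond
      refine ⟨fun hb0 => ?_, hw⟩
      have ha : a ≠ 0 := fun ha0 => hne (by rw [ha0, hb0])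
      rw [hb0, hzero a ha] at hw
      have hpos : (0:ℤ) < 2^(s+f) := by positivity
      linarith
    · rintro ⟨hb, hw⟩
      exact ⟨fun hc => hb (congrArg Prod.snd hc), (hiff a b).mpr hw⟩
  rw [hset, Set.ncard_coe_finset, Finset.card_filter, Fintype.sum_prod_type,
    Finset.sum_comm]
  have hinner : ∀ b : K,
      (∑ a : K, if ((a, b).2 ≠ 0 ∧ walsh g (a,b).2 (a,b).1 = 2^(s+f)) then 1 else 0)
      = if b ≠ 0 then 2^(m-s-1) + 2^((m-s-2)/2) else 0 := by
    intro b
    by_cases hb : b = 0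
    · subst hb; simp
    · rw [if_pos hb, ← walsh_count m s f hf1 hmsf hcard g hg0 b (hvals b hb),
        Finset.card_filter]
      refine Finset.sum_congr rfl fun a _ => ?_
      simp [hb]
  rw [Finset.sum_congr rfl fun b _ => hinner b, Finset.sum_ite, Finset.sum_const,
    Finset.sum_const_zero, add_zero, smul_eq_mul]
  congr 1
  rw [Finset.filter_ne', Finset.card_erase_of_mem (Finset.mem_univ 0), Finset.card_univ, hcard]
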